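/- arXiv:1801.02484 — 4 statements merged into one kernel-verified Lean document; each statement's English description precedes it below -/
import Mathlib

section
/- Let σ be a deterministic finite word over I × O such that every element of I occurs as the first component of some event of σ (input-exhaustiveness) and σ ∈ φ_m. Then every deterministic extension σ' of σ (i.e., every deterministic word σ' having σ as a prefix) belongs to φ_m. -/
/-- A word over `I × O` is deterministic if any two of its events with equal
inputs have equal outputs. -/
def Deterministic {I O : Type*} (σ : List (I × O)) : Prop :=
  ∀ e₁ ∈ σ, ∀ e₂ ∈ σ, e₁.1 = e₂.1 → e₁.2 = e₂.2

/-- The monolithic minimality property `φ_m`. -/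
def phiM {I O : Type*} (σ : List (I × O)) : Prop :=
  ∀ e₁ ∈ σ, ∀ e₂ ∈ σ, e₁.1 ≠ e₂.1 → e₁.2 ≠ e₂.2

/-- Input-exhaustiveness: every input of `I` occurs in `σ`. -/
def InEx {I O : Type*} (σ : List (I × O)) : Prop :=
  ∀ i : I, ∃ e ∈ σ, e.1 = i

/-- If a deterministic word is input-exhaustive and minimal, then every
deterministic extension of it is minimal. -/
theorem phiM_of_inEx_extension {I O : Type*} (σ : List (I × O))
    (hdet : Deterministic σ) (hex : InEx σ) (hmin : phiM σ) :
    ∀ σ' : List (I × O), Deterministic σ' → σ <+: σ' → phiM σ' := by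
  intro σ' hdet' hpre e₁ h₁ e₂ h₂ hne
  obtain ⟨f₁, hf₁, hf₁i⟩ := hex e₁.1
  obtain ⟨f₂, hf₂, hf₂i⟩ := hex e₂.1
  have m₁ : f₁ ∈ σ' := hpre.subset hf₁
  have m₂ : f₂ ∈ σ' := hpre.subset hf₂
  have o₁ : e₁.2 = f₁.2 := hdet' e₁ h₁ f₁ m₁ hf₁i.symm
  have o₂ : e₂.2 = f₂.2 := hdet' e₂ h₂ f₂ m₂ hf₂i.symm
  rw [o₁, o₂]
  exact hmin f₁ hf₁ f₂ hf₂ (by rw [hf₁i, hf₂i]; exact hne)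
end

section
/- Let I be a set of inputs, and define the monitor M_{φ_m} on deterministic finite words σ over I × O by: M(σ) = ⊤ if |σ| > 1, every element of I occurs as a first component of σ, and σ ∈ φ_m; M(σ) = ⊥ if |σ| > 1 and σ ∉ φ_m; and M(σ) = ? otherwise. Then M_{φ_m} is anticipatory in the following sense: if M_{φ_m}(σ) = ⊤ then every deterministic extension of σ belongs to φ_m, and if M_{φ_m}(σ) = ⊥ then no deterministic extension of σ belongs to φ_m. -/
inductive Verdict : Type
  | top
  | bot
  | unk

open Classical in
/-- The monitor `M_{φ_m}` for monolithic minimality. -/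
noncomputable def MphiM {I O : Type*} (σ : List (I × O)) : Verdict :=
  if 1 < σ.length ∧ (∀ i : I, ∃ e ∈ σ, e.1 = i) ∧ phiM σ then Verdict.top
  else if 1 < σ.length ∧ ¬ phiM σ then Verdict.bot
  else Verdict.unk

/-- The monitor `M_{φ_m}` is anticipatory: a `⊤` verdict means every
deterministic extension is minimal, and a `⊥` verdict means no deterministic
extension is minimal. -/
theorem MphiM_anticipation {I O : Type*} (σ : List (I × O))
    (hdet : Deterministic σ) :
    (MphiM σ = Verdict.top →
      ∀ σ' : List (I × O), Deterministic σ' → σ <+: σ' → phiM σ') ∧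
    (MphiM σ = Verdict.bot →
      ∀ σ' : List (I × O), Deterministic σ' → σ <+: σ' → ¬ phiM σ') := by
  constructor
  · intro htop σ' hdet' hpre
    unfold MphiM at htop
    split at htop
    · rename_i h
      obtain ⟨-, hall, hφ⟩ := h
      intro e₁ he₁ e₂ he₂ hne
      obtain ⟨f₁, hf₁, hf₁i⟩ := hall e₁.1
      obtain ⟨f₂, hf₂, hf₂i⟩ := hall e₂.1
      have hs := hpre.subset
      have h1 : f₁.2 = e₁.2 := hdet' f₁ (hs hf₁) e₁ he₁ hf₁i
      have h2 : f₂.2 = e₂.2 := hdet' f₂ (hs hf₂) e₂ he₂ hf₂i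
      have := hφ f₁ hf₁ f₂ hf₂ (by rw [hf₁i, hf₂i]; exact hne)
      rw [h1, h2] at this
      exact this
    · split at htop <;> simp at htop
  · intro hbot σ' hdet' hpre hφ'
    unfold MphiM at hbot
    split at hbot
    · simp at hbot
    · split at hbot
      · rename_i h
        exact h.2 fun e₁ he₁ e₂ he₂ hne =>
          hφ' e₁ (hpre.subset he₁) e₂ (hpre.subset he₂) hne
      · simp at hbot
end

section
/- Let σ be a deterministic finite word over (Π j, ι j) × O such that every element of the input domain Π j, ι j occurs as the first component of some event of σ (input-exhaustiveness) and σ ∈ φ_sdm. Then every deterministic extension σ' of σ (every deterministic word having σ as a prefix) belongs to φ_sdm. -/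
/-- Two input events differ in exactly one coordinate. -/
def DiffOne {J : Type*} {ι : J → Type*} (i₁ i₂ : ∀ j, ι j) : Prop :=
  ∃ x, i₁ x ≠ i₂ x ∧ ∀ y, y ≠ x → i₁ y = i₂ y

/-- The strong distributed minimality property `φ_sdm`. -/
def phiSdm {J : Type*} {ι : J → Type*} {O : Type*}
    (σ : List ((∀ j, ι j) × O)) : Prop :=
  ∀ e₁ ∈ σ, ∀ e₂ ∈ σ, DiffOne e₁.1 e₂.1 → e₁.2 ≠ e₂.2

/-- If a deterministic word is input-exhaustive and strongly distributed
minimal, then every deterministic extension of it is strongly distributed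
minimal. -/
theorem phiSdm_of_inEx_extension {J : Type*} {ι : J → Type*} {O : Type*}
    (σ : List ((∀ j, ι j) × O)) (hdet : Deterministic σ)
    (hex : InEx σ) (hmin : phiSdm σ) :
    ∀ σ' : List ((∀ j, ι j) × O), Deterministic σ' → σ <+: σ' → phiSdm σ' := by
  intro σ' hdet' hpre e₁ h₁ e₂ h₂ hdiff
  obtain ⟨f₁, hf₁, hf₁i⟩ := hex e₁.1
  obtain ⟨f₂, hf₂, hf₂i⟩ := hex e₂.1
  have hsub : ∀ e ∈ σ, e ∈ σ' := fun e he => hpre.subset he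
  have h1 : e₁.2 = f₁.2 := hdet' e₁ h₁ f₁ (hsub f₁ hf₁) hf₁i.symm
  have h2 : e₂.2 = f₂.2 := hdet' e₂ h₂ f₂ (hsub f₂ hf₂) hf₂i.symm
  have := hmin f₁ hf₁ f₂ hf₂ (by rw [hf₁i, hf₂i]; exact hdiff)
  rw [h1, h2]; exact this
end

section
/- Let DF : (Π j, ι j) → O be a function. DF is strong distributed non-minimal (there exist input events i₁, i₂ differing in exactly one coordinate with DF(i₁) = DF(i₂)) if and only if there exists a finite word σ ∈ L(DP) with σ ∈ φ̄_sdm; and DF is strong distributed minimal (for all input events i₁, i₂ differing in exactly one coordinate, DF(i₁) ≠ DF(i₂)) if and only if every finite word σ ∈ L(DP) belongs to φ_sdm. -/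
/-- The strong distributed non-minimality property `φ̄_sdm`. -/
def phiSdmBar {J : Type*} {ι : J → Type*} {O : Type*}
    (σ : List ((∀ j, ι j) × O)) : Prop :=
  Deterministic σ ∧ ∃ e₁ ∈ σ, ∃ e₂ ∈ σ, DiffOne e₁.1 e₂.1 ∧ e₁.2 = e₂.2

/-- The language of the program-in-loop `DP` associated to `DF`. -/
def LDP {J : Type*} {ι : J → Type*} {O : Type*} (DF : (∀ j, ι j) → O)
    (σ : List ((∀ j, ι j) × O)) : Prop :=
  ∀ e ∈ σ, e.2 = DF e.1

/-- `DF` is strong distributed non-minimal iff some word of `L(DP)` satisfies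
`φ̄_sdm`, and `DF` is strong distributed minimal iff every word of `L(DP)`
satisfies `φ_sdm`. -/
theorem sdm_characterisations {J : Type*} {ι : J → Type*} {O : Type*}
    (DF : (∀ j, ι j) → O) :
    ((∃ i₁ i₂ : ∀ j, ι j, DiffOne i₁ i₂ ∧ DF i₁ = DF i₂) ↔
      ∃ σ : List ((∀ j, ι j) × O), LDP DF σ ∧ phiSdmBar σ) ∧
    ((∀ i₁ i₂ : ∀ j, ι j, DiffOne i₁ i₂ → DF i₁ ≠ DF i₂) ↔
      ∀ σ : List ((∀ j, ι j) × O), LDP DF σ → phiSdm σ) := by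
  constructor
  · constructor
    · rintro ⟨i₁, i₂, hd, he⟩
      refine ⟨[(i₁, DF i₁), (i₂, DF i₂)], ?_, ?_, ?_⟩
      · rintro e he'
        simp only [List.mem_cons, List.not_mem_nil, or_false] at he'
        rcases he' with h | h <;> simp [h]
      · rintro e₁ h₁ e₂ h₂ h
        simp only [List.mem_cons, List.not_mem_nil, or_false] at h₁ h₂
        rcases h₁ with h₁ | h₁ <;> rcases h₂ with h₂ | h₂ <;> subst h₁ <;> subst h₂ <;>
          simp_all
      · exact ⟨(i₁, DF i₁), by simp, (i₂, DF i₂), by simp, hd, he⟩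
    · rintro ⟨σ, hL, _, e₁, h₁, e₂, h₂, hd, he⟩
      exact ⟨e₁.1, e₂.1, hd, by rw [← hL e₁ h₁, ← hL e₂ h₂]; exact he⟩
  · constructor
    · intro h σ hL e₁ h₁ e₂ h₂ hd heq
      exact h e₁.1 e₂.1 hd (by rw [← hL e₁ h₁, ← hL e₂ h₂]; exact heq)
    · intro h i₁ i₂ hd he
      exact h [(i₁, DF i₁), (i₂, DF i₂)]
        (by rintro e he'; simp only [List.mem_cons, List.not_mem_nil, or_false] at he';
            rcases he' with h | h <;> simp [h])
        (i₁, DF i₁) (by simp) (i₂, DF i₂) (by simp) hd he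
end
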